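/- arXiv:1705.00822 — 5 statements merged into one kernel-verified Lean document; each statement's English description precedes it below -/
import Mathlib

section
/- Let Y ⊆ ℝ^d be closed and convex, and for i ∈ I let f_i, F̂_i : Y → ℝ be continuous and convex. Let γ, ε ∈ ℝ with ε < γ, and suppose there is y ∈ Y with f_i(y) < ε for all i ∈ I. Define X_γ := {x ∈ Y : f_i(x) ≤ γ ∀i}, X̂ := {x ∈ Y : F̂_i(x) ≤ ε̂_i ∀i}, δ̂_i(y) := max(0, F̂_i(y) − f_i(y)), and Δ̂_i(γ) := max(0, sup{γ − F̂_i(x) : x ∈ X_γ, f_i(x) = γ}). If for all i ∈ I both Δ̂_i(γ) + δ̂_i(y) ≤ γ − ε and Δ̂_i(γ) ≤ γ − ε̂_i hold, then X̂ ⊆ X_γ. -/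
/-!
Suppose `x ∈ X̂` but `f i₀ x > γ`. Along the segment from the strictly feasible `y` to `x`, the
maximum of the `f i` passes through `γ`, at a point `z` strictly between `y` and `x` that lies in
`X_γ` with some constraint `i` active. The two hypotheses at `(i, z)` give `Fh i z > Fh i y` and
`Fh i z ≥ εh i ≥ Fh i x`, so the convex function `Fh i` would be maximal in the interior of the
segment, which is impossible.
-/

section Segment

variable {E : Type*} [AddCommGroup E] [Module ℝ E] [TopologicalSpace E]
  [ContinuousAdd E] [ContinuousSMul ℝ E] {Y : Set E} {x y : E} {γ : ℝ}

theorem Convex.exists_mem_openSegment_eq_of_lt_of_lt (hY : Convex ℝ Y) (hy : y ∈ Y) (hx : x ∈ Y)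
    {g : E → ℝ} (hg : ContinuousOn g Y) (hgy : g y < γ) (hgx : γ < g x) :
    ∃ z ∈ openSegment ℝ y x, g z = γ := by
  have hseg : segment ℝ y x ⊆ Y := hY.segment_subset hy hx
  obtain ⟨z, hz, hgz⟩ := (convex_segment y x).isPreconnected.intermediate_value
    (left_mem_segment ℝ y x) (right_mem_segment ℝ y x) (hg.mono hseg) ⟨hgy.le, hgx.le⟩
  refine ⟨z, mem_openSegment_of_ne_left_right ?_ ?_ hz, hgz⟩
  · rintro rfl; exact hgy.ne hgz
  · rintro rfl; exact hgx.ne' hgz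

theorem Convex.exists_mem_openSegment_active {ι : Type*} [Fintype ι] (hY : Convex ℝ Y)
    (hy : y ∈ Y) (hx : x ∈ Y) {f : ι → E → ℝ} (hf : ∀ i, ContinuousOn (f i) Y)
    (hfy : ∀ i, f i y < γ) (hfx : ∃ i, γ < f i x) :
    ∃ z ∈ openSegment ℝ y x, (∀ j, f j z ≤ γ) ∧ ∃ i, f i z = γ := by
  obtain ⟨i₀, hi₀⟩ := hfx
  have hne : (Finset.univ : Finset ι).Nonempty := ⟨i₀, Finset.mem_univ i₀⟩
  set g : E → ℝ := fun z ↦ Finset.univ.sup' hne fun i ↦ f i z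
  have hg : ContinuousOn g Y := ContinuousOn.finset_sup'_apply hne fun i _ ↦ hf i
  have hgy : g y < γ := (Finset.sup'_lt_iff hne).2 fun i _ ↦ hfy i
  have hgx : γ < g x := hi₀.trans_le (Finset.le_sup' (fun i ↦ f i x) (Finset.mem_univ i₀))
  obtain ⟨z, hz, hgz⟩ := hY.exists_mem_openSegment_eq_of_lt_of_lt hy hx hg hgy hgx
  obtain ⟨i, -, hi⟩ := Finset.exists_mem_eq_sup' hne fun i ↦ f i z
  exact ⟨z, hz, fun j ↦ hgz ▸ Finset.le_sup' (fun i ↦ f i z) (Finset.mem_univ j), i, hi ▸ hgz⟩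

end Segment

theorem stmt_1_general {d : ℕ} {ι : Type*} [Fintype ι]
    (Y : Set (EuclideanSpace ℝ (Fin d))) (hYcon : Convex ℝ Y)
    (f Fh : ι → EuclideanSpace ℝ (Fin d) → ℝ)
    (hfc : ∀ i, ContinuousOn (f i) Y)
    (hFv : ∀ i, ConvexOn ℝ Y (Fh i))
    (γ ε : ℝ) (hεγ : ε < γ) (εh : ι → ℝ)
    (y : EuclideanSpace ℝ (Fin d)) (hy : y ∈ Y) (hyin : ∀ i, f i y < ε)
    (hC1 : ∀ i, max 0 (Fh i y - f i y) ≤ γ - ε ∧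
      ∀ x ∈ Y, (∀ j, f j x ≤ γ) → f i x = γ →
        (γ - Fh i x) + max 0 (Fh i y - f i y) ≤ γ - ε)
    (hC2 : ∀ i, 0 ≤ γ - εh i ∧
      ∀ x ∈ Y, (∀ j, f j x ≤ γ) → f i x = γ → γ - Fh i x ≤ γ - εh i) :
    {x ∈ Y | ∀ i, Fh i x ≤ εh i} ⊆ {x ∈ Y | ∀ i, f i x ≤ γ} := by
  rintro x ⟨hx, hxF⟩
  refine ⟨hx, fun i₀ ↦ ?_⟩
  by_contra! hi₀
  obtain ⟨z, hz, hzγ, i, hi⟩ := hYcon.exists_mem_openSegment_active hy hx hfc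
    (fun i ↦ (hyin i).trans hεγ) ⟨i₀, hi₀⟩
  have hzY : z ∈ Y := hYcon.openSegment_subset hy hx hz
  have hyz : Fh i y < Fh i z := by
    have := (hC1 i).2 z hzY hzγ hi
    linarith [le_max_right 0 (Fh i y - f i y), hyin i]
  have hxz : Fh i x ≤ Fh i z := by
    linarith [(hC2 i).2 z hzY hzγ hi, hxF i]
  exact hxz.not_gt ((hFv i).lt_right_of_left_lt hy hx hz hyz)

/-- Localized feasibility deviation for convex feasible sets: feasibility of the
perturbed set is controlled by the perturbation at one strictly feasible point `y`
and on the active level sets `{x ∈ X_γ : f_i x = γ}`. -/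
theorem stmt_1 {d : ℕ} {ι : Type*} [Fintype ι]
    (Y : Set (EuclideanSpace ℝ (Fin d))) (hYcl : IsClosed Y) (hYcon : Convex ℝ Y)
    (f Fh : ι → EuclideanSpace ℝ (Fin d) → ℝ)
    (hfc : ∀ i, ContinuousOn (f i) Y) (hFc : ∀ i, ContinuousOn (Fh i) Y)
    (hfv : ∀ i, ConvexOn ℝ Y (f i)) (hFv : ∀ i, ConvexOn ℝ Y (Fh i))
    (γ ε : ℝ) (hεγ : ε < γ) (εh : ι → ℝ)
    (y : EuclideanSpace ℝ (Fin d)) (hy : y ∈ Y) (hyin : ∀ i, f i y < ε)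
    (hC1 : ∀ i, max 0 (Fh i y - f i y) ≤ γ - ε ∧
      ∀ x ∈ Y, (∀ j, f j x ≤ γ) → f i x = γ →
        (γ - Fh i x) + max 0 (Fh i y - f i y) ≤ γ - ε)
    (hC2 : ∀ i, 0 ≤ γ - εh i ∧
      ∀ x ∈ Y, (∀ j, f j x ≤ γ) → f i x = γ → γ - Fh i x ≤ γ - εh i) :
    {x ∈ Y | ∀ i, Fh i x ≤ εh i} ⊆ {x ∈ Y | ∀ i, f i x ≤ γ} :=
  stmt_1_general Y hYcon f Fh hfc hFv γ ε hεγ εh y hy hyin hC1 hC2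
end

section
/- Let Y be compact, I finite, f_i, F̂_i : Y → ℝ continuous (i ∈ I ∪ {0}), f := f_0, F̂ := F̂_0, X := {x ∈ Y : f_i(x) ≤ 0 ∀i∈I}, X_γ := {x ∈ Y : f_i(x) ≤ γ ∀i∈I}, X̂ := {x ∈ Y : F̂_i(x) ≤ ε̂_i ∀i∈I}, and let x* minimize f over X with value f*. Assume: (F) for all i ∈ I, max(0, sup_Y(f_i − F̂_i)) ≤ γ − ε̂_i; (P) for all i ∈ I, max(0, F̂_i(x*) − f_i(x*)) ≤ ε̂_i; (M) max(0, sup_{x∈X_γ}(f(x) − f(x*) − F̂(x) + F̂(x*))) ≤ t − t_1, where t, t_1, γ ≥ 0. Then X̂ ⊆ X_γ, and every x̂ ∈ X̂ with F̂(x̂) ≤ inf_{X̂} F̂ + t_1 satisfies f(x̂) ≤ f* + t. -/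
/-!
(F) bounds `f i - F̂ i` by `γ - ε̂ i`, so every point feasible for the perturbed problem is
`γ`-feasible and (M) applies to it. (P) makes `x*` feasible for the perturbed problem, so a
`t₁`-near minimizer `x̂` of `F̂` satisfies `F̂ x̂ - F̂ x* ≤ t₁`. Adding this to (M) at `x̂` gives
`f x̂ - f x* ≤ t`.
-/

section ExteriorApproximation

variable {α ι : Type*}

theorem sep_forall_le_subset_sep_forall_le {Y : Set α} {f F : ι → α → ℝ} {ε : ι → ℝ} {γ : ℝ}
    (hF : ∀ i, ∀ y ∈ Y, f i y - F i y ≤ γ - ε i) :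
    {x ∈ Y | ∀ i, F i x ≤ ε i} ⊆ {x ∈ Y | ∀ i, f i x ≤ γ} := by
  rintro x ⟨hxY, hx⟩
  exact ⟨hxY, fun i => by linarith [hF i x hxY, hx i]⟩

theorem mem_sep_forall_le_of_feasible {Y : Set α} {f F : ι → α → ℝ} {ε : ι → ℝ} {x : α}
    (hx : x ∈ {x ∈ Y | ∀ i, f i x ≤ 0}) (hP : ∀ i, max 0 (F i x - f i x) ≤ ε i) :
    x ∈ {x ∈ Y | ∀ i, F i x ≤ ε i} :=
  ⟨hx.1, fun i => by linarith [hx.2 i, (le_max_right _ _).trans (hP i)]⟩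

theorem sub_le_of_le_sInf_image_add {F : α → ℝ} {S : Set α} {x y : α} {t : ℝ}
    (hS : BddBelow (F '' S)) (hx : x ∈ S) (hy : F y ≤ sInf (F '' S) + t) :
    F y - F x ≤ t := by
  linarith [csInf_le hS (Set.mem_image_of_mem F hx)]

end ExteriorApproximation

theorem stmt_3_general {d : ℕ} {ι : Type*}
    (Y : Set (EuclideanSpace ℝ (Fin d))) (hY : IsCompact Y)
    (f Fh : ι → EuclideanSpace ℝ (Fin d) → ℝ)
    (f0 F0 : EuclideanSpace ℝ (Fin d) → ℝ)
    (hF0 : ContinuousOn F0 Y)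
    (εh : ι → ℝ) (γ t t1 : ℝ)
    (xstar : EuclideanSpace ℝ (Fin d)) (hxs : xstar ∈ {x ∈ Y | ∀ i, f i x ≤ 0})
    (hF : ∀ i, 0 ≤ γ - εh i ∧ ∀ y ∈ Y, f i y - Fh i y ≤ γ - εh i)
    (hP : ∀ i, max 0 (Fh i xstar - f i xstar) ≤ εh i)
    (hM : ∀ x ∈ Y, (∀ i, f i x ≤ γ) → f0 x - f0 xstar - (F0 x - F0 xstar) ≤ t - t1) :
    {x ∈ Y | ∀ i, Fh i x ≤ εh i} ⊆ {x ∈ Y | ∀ i, f i x ≤ γ} ∧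
    ∀ xh ∈ {x ∈ Y | ∀ i, Fh i x ≤ εh i},
      F0 xh ≤ sInf (F0 '' {x ∈ Y | ∀ i, Fh i x ≤ εh i}) + t1 →
      f0 xh ≤ f0 xstar + t := by
  have hsub := sep_forall_le_subset_sep_forall_le (fun i => (hF i).2)
  refine ⟨hsub, fun xh hxh hnear => ?_⟩
  have hbdd : BddBelow (F0 '' {x ∈ Y | ∀ i, Fh i x ≤ εh i}) :=
    (hY.image_of_continuousOn hF0).bddBelow.mono (Set.image_mono (Set.sep_subset _ _))
  have hFdev : F0 xh - F0 xstar ≤ t1 :=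
    sub_le_of_le_sInf_image_add hbdd (mem_sep_forall_le_of_feasible hxs hP) hnear
  obtain ⟨hxhY, hxhγ⟩ := hsub hxh
  linarith [hM xh hxhY hxhγ]

/-- Optimality deviation with exterior approximation: under (F) the perturbed
feasible set lies in the relaxed set `X_γ`, and under (P), (M) every `t₁`-near
solution of the perturbed problem is a `t`-near solution of the original one. -/
theorem stmt_3 {d : ℕ} {ι : Type*} [Fintype ι]
    (Y : Set (EuclideanSpace ℝ (Fin d))) (hY : IsCompact Y)
    (f Fh : ι → EuclideanSpace ℝ (Fin d) → ℝ)
    (f0 F0 : EuclideanSpace ℝ (Fin d) → ℝ)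
    (hfc : ∀ i, ContinuousOn (f i) Y) (hFc : ∀ i, ContinuousOn (Fh i) Y)
    (hf0 : ContinuousOn f0 Y) (hF0 : ContinuousOn F0 Y)
    (εh : ι → ℝ) (γ t t1 : ℝ) (hγ : 0 ≤ γ) (ht1 : 0 ≤ t1) (ht : t1 ≤ t)
    (xstar : EuclideanSpace ℝ (Fin d)) (hxs : xstar ∈ {x ∈ Y | ∀ i, f i x ≤ 0})
    (hmin : ∀ z ∈ {x ∈ Y | ∀ i, f i x ≤ 0}, f0 xstar ≤ f0 z)
    (hF : ∀ i, 0 ≤ γ - εh i ∧ ∀ y ∈ Y, f i y - Fh i y ≤ γ - εh i)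
    (hP : ∀ i, max 0 (Fh i xstar - f i xstar) ≤ εh i)
    (hM : ∀ x ∈ Y, (∀ i, f i x ≤ γ) → f0 x - f0 xstar - (F0 x - F0 xstar) ≤ t - t1) :
    {x ∈ Y | ∀ i, Fh i x ≤ εh i} ⊆ {x ∈ Y | ∀ i, f i x ≤ γ} ∧
    ∀ xh ∈ {x ∈ Y | ∀ i, Fh i x ≤ εh i},
      F0 xh ≤ sInf (F0 '' {x ∈ Y | ∀ i, Fh i x ≤ εh i}) + t1 →
      f0 xh ≤ f0 xstar + t :=
  stmt_3_general Y hY f Fh f0 F0 hF0 εh γ t t1 xstar hxs hF hP hM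
end

section
/- (Robinson) Let Y ⊆ ℝ^d be closed convex, I finite, f_i : Y → ℝ continuous and convex for i ∈ I, and suppose X := {x ∈ Y : f_i(x) ≤ 0 ∀i} is compact and there exists x̄ ∈ Y with ε̊ := min_{i∈I}(−f_i(x̄)) > 0 (Slater condition). Then for all x ∈ Y, dist(x, X) ≤ (D(X)/ε̊)·max_{i∈I}[f_i(x)]_+, where D(X) is the diameter of X and [a]_+ := max(a,0). -/
/-- Robinson's theorem: Slater's condition plus compactness of the convex feasible
set `X = {x ∈ Y : f_i x ≤ 0 ∀ i}` implies metric regularity with constant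
`diam X / ε̊` where `ε̊ = min_i (-f_i x̄) > 0`. -/
theorem stmt_5 {d : ℕ} {ι : Type*} [Fintype ι] [Nonempty ι]
    (Y : Set (EuclideanSpace ℝ (Fin d))) (hYcl : IsClosed Y) (hYcon : Convex ℝ Y)
    (f : ι → EuclideanSpace ℝ (Fin d) → ℝ)
    (hfc : ∀ i, ContinuousOn (f i) Y) (hfv : ∀ i, ConvexOn ℝ Y (f i))
    (hX : IsCompact {x ∈ Y | ∀ i, f i x ≤ 0})
    (xbar : EuclideanSpace ℝ (Fin d)) (hxbar : xbar ∈ Y)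
    (hslater : 0 < ⨅ i, -f i xbar) :
    ∀ x ∈ Y, Metric.infDist x {x ∈ Y | ∀ i, f i x ≤ 0} ≤
      (Metric.diam {x ∈ Y | ∀ i, f i x ≤ 0} / ⨅ i, -f i xbar) * ⨆ i, max (f i x) 0 := by
  intro x hx
  set X := {x ∈ Y | ∀ i, f i x ≤ 0} with hXdef
  set ε := ⨅ i, -f i xbar with hεdef
  set M := ⨆ i, max (f i x) 0 with hMdef
  have hεle : ∀ i, ε ≤ -f i xbar := fun i => ciInf_le (Set.Finite.bddBelow (Set.finite_range _)) i
  have hMle : ∀ i, f i x ≤ M := fun i =>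
    (le_max_left _ _).trans (le_ciSup (f := fun i => max (f i x) 0) (Set.Finite.bddAbove (Set.finite_range _)) i)
  obtain ⟨i0⟩ := ‹Nonempty ι›
  have hM0 : 0 ≤ M :=
    (le_max_right _ _).trans (le_ciSup (f := fun i => max (f i x) 0) (Set.Finite.bddAbove (Set.finite_range _)) i0)
  have hxbarX : xbar ∈ X := ⟨hxbar, fun i => by have := hεle i; linarith⟩
  have hD0 : 0 ≤ Metric.diam X := Metric.diam_nonneg
  rcases eq_or_lt_of_le hM0 with hM | hM
  · have hxX : x ∈ X := ⟨hx, fun i => (hMle i).trans hM.ge⟩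
    rw [Metric.infDist_zero_of_mem hxX]
    exact mul_nonneg (div_nonneg hD0 hslater.le) hM0
  · set t := M / (M + ε) with htdef
    have hMε : 0 < M + ε := by linarith
    have ht0 : 0 ≤ t := by positivity
    have ht1 : t ≤ 1 := by rw [htdef, div_le_one hMε]; linarith
    have ht' : t * (M + ε) = M := by rw [htdef]; field_simp
    set z := (1 - t) • x + t • xbar with hzdef
    have hzY : z ∈ Y := hYcon hx hxbar (by linarith) ht0 (by ring)
    have hzX : z ∈ X := by
      refine ⟨hzY, fun i => ?_⟩
      have h1 := (hfv i).2 hx hxbar (by linarith : (0:ℝ) ≤ 1 - t) ht0 (by ring)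
      simp only [← hzdef, smul_eq_mul] at h1
      have h2 := hεle i
      have h3 := hMle i
      nlinarith [h1, mul_le_mul_of_nonneg_left h3 (by linarith : (0:ℝ) ≤ 1 - t),
        mul_le_mul_of_nonneg_left h2 ht0, ht']
    have hdist : dist x z = t * dist x xbar := by
      rw [dist_eq_norm, dist_eq_norm]
      have hxz : x - z = t • (x - xbar) := by rw [hzdef]; module
      rw [hxz, norm_smul, Real.norm_eq_abs, abs_of_nonneg ht0]
    have htri : dist x xbar ≤ dist x z + Metric.diam X := by
      have h := dist_triangle x z xbar
      have hle : dist z xbar ≤ Metric.diam X :=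
        Metric.dist_le_diam_of_mem hX.isBounded hzX hxbarX
      linarith
    have h1 : dist x z ≤ t * (dist x z + Metric.diam X) := by
      have h := mul_le_mul_of_nonneg_left htri ht0
      rw [← hdist] at h; exact h
    have hkey : dist x z ≤ Metric.diam X / ε * M := by
      rw [div_mul_eq_mul_div, le_div_iff₀ hslater]
      nlinarith [mul_le_mul_of_nonneg_right h1 hMε.le, dist_nonneg (x := x) (y := z)]
    calc Metric.infDist x X ≤ dist x z := Metric.infDist_le_dist_of_mem hzX
    _ ≤ _ := hkey
end

section
/- Let Y ⊆ ℝ^d be compact, X ⊆ Y nonempty compact, and f : Y → ℝ satisfy |f(x) − f(y)| ≤ L‖x−y‖^α for all x,y ∈ Y with L ≥ 0 and α ∈ (0,1]. Suppose dist(x,X) ≤ c·max_{i∈I}[f_i(x)]_+ on Y (metric regularity with constant c), where X = {x∈Y : f_i(x) ≤ 0 ∀i}, and let X_γ := {x∈Y : f_i(x) ≤ γ ∀i} for γ > 0. Then 0 ≤ Gap(γ) := min_X f − min_{X_γ} f ≤ L (cγ)^α. Moreover, if there exists a minimizer of f over X_γ that belongs to X, then Gap(γ) = 0. -/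
/-!
Let `X` be the feasible set and `X_γ` its relaxation. Since `X ⊆ X_γ`, the minimum over `X_γ`
is at most the one over `X`. Conversely, at a minimizer `x` of `f` over `X_γ` every constraint
is violated by at most `γ`, so metric regularity places a point `y ∈ X` within distance `cγ`
of `x`, and the Hölder bound gives `min_X f ≤ f y ≤ f x + L (cγ)^α`.
-/

open Set Metric NNReal

theorem IsCompact.sep_forall_le {X ι : Type*} [TopologicalSpace X] {Y : Set X}
    (hY : IsCompact Y) {g : ι → X → ℝ} (hg : ∀ i, ContinuousOn (g i) Y) (t : ℝ) :
    IsCompact {x ∈ Y | ∀ i, g i x ≤ t} := by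
  have : CompactSpace Y := isCompact_iff_compactSpace.1 hY
  have hclosed : IsClosed {y : Y | ∀ i, g i y ≤ t} := by
    simp only [ofPred_forall]
    exact isClosed_iInter fun i ↦ isClosed_le (hg i).domRestrict continuous_const
  convert hclosed.isCompact.image continuous_subtype_val using 1
  ext x
  simp [and_comm]

theorem holderOnWith_of_dist_le {X Y : Type*} [PseudoMetricSpace X] [PseudoMetricSpace Y]
    {C r : ℝ≥0} {f : X → Y} {s : Set X}
    (h : ∀ x ∈ s, ∀ y ∈ s, dist (f x) (f y) ≤ C * dist x y ^ (r : ℝ)) :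
    HolderOnWith C r f s := by
  intro x hx y hy
  rw [edist_dist, edist_dist, ENNReal.ofReal_rpow_of_nonneg dist_nonneg r.coe_nonneg,
    ← ENNReal.ofReal_coe_nnreal, ← ENNReal.ofReal_mul C.coe_nonneg]
  exact ENNReal.ofReal_le_ofReal (h x hx y hy)

theorem IsMinOn.csInf_image_eq {α β : Type*} [ConditionallyCompleteLattice β] {f : α → β}
    {s : Set α} {a : α} (ha : a ∈ s) (h : IsMinOn f s a) : sInf (f '' s) = f a :=
  IsLeast.csInf_eq ⟨mem_image_of_mem f ha, forall_mem_image.2 h⟩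

theorem csInf_image_eq_of_isMinOn_of_subset {α β : Type*} [ConditionallyCompleteLattice β]
    {f : α → β} {s t : Set α} {a : α} (hst : s ⊆ t) (ha : a ∈ s) (h : IsMinOn f t a) :
    sInf (f '' s) = sInf (f '' t) := by
  rw [IsMinOn.csInf_image_eq ha (h.on_subset hst), IsMinOn.csInf_image_eq (hst ha) h]

theorem HolderOnWith.csInf_image_sub_csInf_image_le {X : Type*} [PseudoMetricSpace X]
    {C r : ℝ≥0} {f : X → ℝ} {s t : Set X} (hf : HolderOnWith C r f t) (hr : 0 < r)
    (hst : s ⊆ t) (hs : IsCompact s) (hsne : s.Nonempty) (ht : IsCompact t) {δ : ℝ}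
    (hδ : ∀ x ∈ t, infDist x s ≤ δ) :
    sInf (f '' s) - sInf (f '' t) ≤ C * δ ^ (r : ℝ) := by
  have hfc : ContinuousOn f t := hf.continuousOn hr
  obtain ⟨x, hxt, hxmin⟩ := ht.exists_isMinOn (hsne.mono hst) hfc
  obtain ⟨y, hys, hxy⟩ := hs.exists_infDist_eq_dist hsne x
  have hbdd : BddBelow (f '' s) := (hs.image_of_continuousOn (hfc.mono hst)).bddBelow
  calc sInf (f '' s) - sInf (f '' t) ≤ f y - f x := by
        rw [hxmin.csInf_image_eq hxt]
        gcongr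
        exact csInf_le hbdd (mem_image_of_mem f hys)
    _ ≤ dist (f y) (f x) := (le_abs_self _).trans_eq (Real.dist_eq _ _).symm
    _ ≤ C * δ ^ (r : ℝ) :=
        hf.dist_le_of_le (hst hys) hxt (by rw [dist_comm, ← hxy]; exact hδ x hxt)

theorem stmt_7_general {d : ℕ} {ι : Type*}
    (Y : Set (EuclideanSpace ℝ (Fin d))) (hY : IsCompact Y)
    (f : EuclideanSpace ℝ (Fin d) → ℝ) (fI : ι → EuclideanSpace ℝ (Fin d) → ℝ)
    (hfIc : ∀ i, ContinuousOn (fI i) Y)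
    (L α : ℝ) (hL : 0 ≤ L) (hα0 : 0 < α)
    (hHol : ∀ x ∈ Y, ∀ y ∈ Y, |f x - f y| ≤ L * ‖x - y‖ ^ α)
    (c : ℝ) (hc : 0 < c)
    (hXne : {x ∈ Y | ∀ i, fI i x ≤ 0}.Nonempty)
    (hmr : ∀ x ∈ Y, Metric.infDist x {x ∈ Y | ∀ i, fI i x ≤ 0} ≤ c * ⨆ i, max (fI i x) 0)
    (γ : ℝ) (hγ : 0 < γ) :
    0 ≤ sInf (f '' {x ∈ Y | ∀ i, fI i x ≤ 0}) - sInf (f '' {x ∈ Y | ∀ i, fI i x ≤ γ}) ∧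
    sInf (f '' {x ∈ Y | ∀ i, fI i x ≤ 0}) - sInf (f '' {x ∈ Y | ∀ i, fI i x ≤ γ}) ≤
      L * (c * γ) ^ α ∧
    ((∃ xm ∈ {x ∈ Y | ∀ i, fI i x ≤ γ},
        (∀ z ∈ {x ∈ Y | ∀ i, fI i x ≤ γ}, f xm ≤ f z) ∧ ∀ i, fI i xm ≤ 0) →
      sInf (f '' {x ∈ Y | ∀ i, fI i x ≤ 0}) = sInf (f '' {x ∈ Y | ∀ i, fI i x ≤ γ})) := by
  set X := {x ∈ Y | ∀ i, fI i x ≤ 0}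
  set Xγ := {x ∈ Y | ∀ i, fI i x ≤ γ}
  have hXXγ : X ⊆ Xγ := fun x hx ↦ ⟨hx.1, fun i ↦ (hx.2 i).trans hγ.le⟩
  have hXγc : IsCompact Xγ := hY.sep_forall_le hfIc γ
  have hf : HolderOnWith ⟨L, hL⟩ ⟨α, hα0.le⟩ f Xγ :=
    holderOnWith_of_dist_le fun x hx y hy ↦ by
      rw [Real.dist_eq, dist_eq_norm]
      exact hHol x hx.1 y hy.1
  have hbdd : BddBelow (f '' Xγ) :=
    (hXγc.image_of_continuousOn (hf.continuousOn hα0)).bddBelow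
  have hdist : ∀ x ∈ Xγ, infDist x X ≤ c * γ := fun x hx ↦
    (hmr x hx.1).trans (by gcongr; exact Real.iSup_le (fun i ↦ max_le (hx.2 i) hγ.le) hγ.le)
  refine ⟨sub_nonneg.2 (csInf_le_csInf hbdd (hXne.image f) (image_mono hXXγ)),
    hf.csInf_image_sub_csInf_image_le hα0 hXXγ (hY.sep_forall_le hfIc 0) hXne hXγc hdist, ?_⟩
  rintro ⟨xm, hxm, hxmin, hxmX⟩
  exact csInf_image_eq_of_isMinOn_of_subset hXXγ ⟨hxm.1, hxmX⟩ hxmin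

/-- Exterior optimality error: for an `α`-Hölder objective with constant `L` and a
metric regular feasible set with constant `c`,
`0 ≤ Gap(γ) := min_X f − min_{X_γ} f ≤ L (cγ)^α`, and `Gap(γ) = 0` as soon as some
minimizer of `f` over `X_γ` lies in `X`. -/
theorem stmt_7 {d : ℕ} {ι : Type*} [Fintype ι]
    (Y : Set (EuclideanSpace ℝ (Fin d))) (hY : IsCompact Y)
    (f : EuclideanSpace ℝ (Fin d) → ℝ) (fI : ι → EuclideanSpace ℝ (Fin d) → ℝ)
    (hfIc : ∀ i, ContinuousOn (fI i) Y)
    (L α : ℝ) (hL : 0 ≤ L) (hα0 : 0 < α) (hα1 : α ≤ 1)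
    (hHol : ∀ x ∈ Y, ∀ y ∈ Y, |f x - f y| ≤ L * ‖x - y‖ ^ α)
    (c : ℝ) (hc : 0 < c)
    (hXne : {x ∈ Y | ∀ i, fI i x ≤ 0}.Nonempty)
    (hmr : ∀ x ∈ Y, Metric.infDist x {x ∈ Y | ∀ i, fI i x ≤ 0} ≤ c * ⨆ i, max (fI i x) 0)
    (γ : ℝ) (hγ : 0 < γ) :
    0 ≤ sInf (f '' {x ∈ Y | ∀ i, fI i x ≤ 0}) - sInf (f '' {x ∈ Y | ∀ i, fI i x ≤ γ}) ∧
    sInf (f '' {x ∈ Y | ∀ i, fI i x ≤ 0}) - sInf (f '' {x ∈ Y | ∀ i, fI i x ≤ γ}) ≤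
      L * (c * γ) ^ α ∧
    ((∃ xm ∈ {x ∈ Y | ∀ i, fI i x ≤ γ},
        (∀ z ∈ {x ∈ Y | ∀ i, fI i x ≤ γ}, f xm ≤ f z) ∧ ∀ i, fI i xm ≤ 0) →
      sInf (f '' {x ∈ Y | ∀ i, fI i x ≤ 0}) = sInf (f '' {x ∈ Y | ∀ i, fI i x ≤ γ})) :=
  stmt_7_general Y hY f fI hfIc L α hL hα0 hHol c hc hXne hmr γ hγ
end

section
/- In the setting of the exterior-approximation result: let Y be compact, X := {x∈Y : f_i(x) ≤ 0 ∀i}, X_{2ε} := {x∈Y : f_i(x) ≤ 2ε ∀i}, X̂ := {x∈Y : F̂_i(x) ≤ ε ∀i}, f* := min_X f, x* ∈ X a minimizer, F̂* := min_{X̂} F̂ (with X̂ nonempty). Assume (F) sup_Y(f_i − F̂_i) ≤ ε for all i ∈ I, (M) sup_{x∈X_{2ε}}(f(x) − f(x*) − F̂(x) + F̂(x*)) ≤ ε, and Δ̂_0(x*) := max(0, f(x*) − F̂(x*)) ≤ ε. Then f* − F̂* ≤ 2ε + Gap(2ε), where Gap(2ε) := f* − min_{X_{2ε}} f. -/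
/-- Exterior-approximation lower bound on the perturbed optimal value: under (F),
(M) and the pointwise deviation bound at `x*`,
`f* − F̂* ≤ 2ε + Gap(2ε)` with `Gap(2ε) = f* − min_{X_{2ε}} f`. -/
theorem stmt_12 {d : ℕ} {ι : Type*} [Fintype ι]
    (Y : Set (EuclideanSpace ℝ (Fin d))) (hY : IsCompact Y)
    (f Fh : ι → EuclideanSpace ℝ (Fin d) → ℝ)
    (f0 F0 : EuclideanSpace ℝ (Fin d) → ℝ)
    (hfc : ∀ i, ContinuousOn (f i) Y) (hFc : ∀ i, ContinuousOn (Fh i) Y)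
    (hf0 : ContinuousOn f0 Y) (hF0 : ContinuousOn F0 Y)
    (ε : ℝ) (hε : 0 < ε)
    (xstar : EuclideanSpace ℝ (Fin d)) (hxs : xstar ∈ {x ∈ Y | ∀ i, f i x ≤ 0})
    (hmin : ∀ z ∈ {x ∈ Y | ∀ i, f i x ≤ 0}, f0 xstar ≤ f0 z)
    (hXhne : {x ∈ Y | ∀ i, Fh i x ≤ ε}.Nonempty)
    (hF : ∀ i, ∀ y ∈ Y, f i y - Fh i y ≤ ε)
    (hM : ∀ x ∈ Y, (∀ i, f i x ≤ 2 * ε) → f0 x - f0 xstar - (F0 x - F0 xstar) ≤ ε)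
    (hΔ : f0 xstar - F0 xstar ≤ ε) :
    f0 xstar - sInf (F0 '' {x ∈ Y | ∀ i, Fh i x ≤ ε}) ≤
      2 * ε + (f0 xstar - sInf (f0 '' {x ∈ Y | ∀ i, f i x ≤ 2 * ε})) := by
  set S : Set (EuclideanSpace ℝ (Fin d)) := {x ∈ Y | ∀ i, f i x ≤ 2 * ε} with hS
  set T : Set (EuclideanSpace ℝ (Fin d)) := {x ∈ Y | ∀ i, Fh i x ≤ ε} with hT
  -- T ⊆ S
  have hTS : T ⊆ S := by
    intro x hx
    refine ⟨hx.1, fun i => ?_⟩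
    have h1 := hF i x hx.1
    have h2 := hx.2 i
    linarith
  -- S is compact
  have hYcl : IsClosed Y := hY.isClosed
  have hScl : IsClosed S := by
    have : S = Y ∩ ⋂ i, (Y ∩ f i ⁻¹' Set.Iic (2 * ε)) := by
      ext x
      simp only [hS, Set.mem_setOf_eq, Set.mem_inter_iff, Set.mem_iInter,
        Set.mem_preimage, Set.mem_Iic]
      exact ⟨fun h => ⟨h.1, fun i => ⟨h.1, h.2 i⟩⟩, fun h => ⟨h.1, fun i => (h.2 i).2⟩⟩
    rw [this]
    exact hYcl.inter (isClosed_iInter fun i =>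
      (hfc i).preimage_isClosed_of_isClosed hYcl isClosed_Iic)
  have hSY : S ⊆ Y := fun x hx => hx.1
  have hScomp : IsCompact S := hY.of_isClosed_subset hScl hSY
  have hbdd : BddBelow (f0 '' S) := (hScomp.image_of_continuousOn (hf0.mono hSY)).bddBelow
  -- main inequality: sInf (f0 '' S) ≤ sInf (F0 '' T) + 2ε
  have key : sInf (f0 '' S) ≤ sInf (F0 '' T) + 2 * ε := by
    have h1 : sInf (f0 '' S) - 2 * ε ≤ sInf (F0 '' T) := by
      apply le_csInf (hXhne.image F0)
      rintro b ⟨x, hxT, rfl⟩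
      have hxS : x ∈ S := hTS hxT
      have h2 : sInf (f0 '' S) ≤ f0 x := csInf_le hbdd ⟨x, hxS, rfl⟩
      have h3 := hM x hxS.1 hxS.2
      linarith
    linarith
  linarith
end
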